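/- arXiv:1711.07059 — 14 statements merged into one kernel-verified Lean document; each statement's English description precedes it below -/
import Mathlib

section
/- The view functor V : Lens → Set (defined by V(X,S) = X on objects and V(λ) = v_λ on lenses) is a Grothendieck fibration. Explicitly, for every function f : X → Y and every diset (Y,R), the lens f̄ : (X,R) → (Y,R) with view f and update (x,r) ↦ r is a cartesian lift of f: for every lens λ : (W,T) → (Y,R) and every function g : W → X with v_λ = f ∘ g, there is a unique lens μ : (W,T) → (X,R) with v_μ = g and f̄ ∘ μ = λ. -/
/-- A lens between 'disets' `(X, S)` and `(Y, R)`: a view function `X → Y` and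
an update function `X × R → S`. -/
structure Lens (X S Y R : Type) where
  v : X → Y
  u : X → R → S

namespace Lens

/-- The identity lens on the diset `(X, S)`. -/
def id (X S : Type) : Lens X S X S := ⟨fun x => x, fun _ s => s⟩

/-- Composition of lenses: `m.comp l` is "first `l`, then `m`". -/
def comp {X S Y R Z Q : Type} (m : Lens Y R Z Q) (l : Lens X S Y R) : Lens X S Z Q :=
  ⟨fun x => m.v (l.v x), fun x q => l.u x (m.u (l.v x) q)⟩

theorem comp_assoc {X S Y R Z Q W T : Type} (c : Lens Z Q W T) (b : Lens Y R Z Q)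
    (a : Lens X S Y R) : (c.comp b).comp a = c.comp (b.comp a) := rfl

/-- The action of the continuation functor `K` on a lens. -/
def K {X S Y R : Type} (l : Lens X S Y R) (k : Y → R) : X → S :=
  fun x => l.u x (k (l.v x))

theorem K_comp {X S Y R Z Q : Type} (m : Lens Y R Z Q) (l : Lens X S Y R) (k : Z → Q) :
    (m.comp l).K k = l.K (m.K k) := rfl

/-- The tensor (monoidal product) of lenses. -/
def tensor {X S Y R X' S' Y' R' : Type} (l : Lens X S Y R) (l' : Lens X' S' Y' R') :
    Lens (X × X') (S × S') (Y × Y') (R × R') :=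
  ⟨fun p => (l.v p.1, l'.v p.2), fun p r => (l.u p.1 r.1, l'.u p.2 r.2)⟩

end Lens

namespace Lens

variable {W T X S Y R : Type}

theorem eq_mk_iff {l : Lens X S Y R} {v : X → Y} {u : X → R → S} :
    l = ⟨v, u⟩ ↔ l.v = v ∧ l.u = u := by
  cases l
  simp only [mk.injEq]

def cartesianLift (f : X → Y) (R : Type) : Lens X R Y R := ⟨f, fun _ r => r⟩

theorem cartesianLift_comp (f : X → Y) (μ : Lens W T X R) :
    (cartesianLift f R).comp μ = ⟨f ∘ μ.v, μ.u⟩ := rfl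

theorem cartesianLift_comp_eq_iff (f : X → Y) (μ : Lens W T X R) (l : Lens W T Y R) :
    (cartesianLift f R).comp μ = l ↔ l.v = f ∘ μ.v ∧ l.u = μ.u := by
  rw [cartesianLift_comp, eq_comm, eq_mk_iff]

end Lens

/-- The view functor `V : Lens → Set` is a Grothendieck fibration: for every function
`f : X → Y` and diset `(Y, R)`, the lens `f̄ : (X, R) → (Y, R)` with view `f` and update
`(x, r) ↦ r` is a cartesian lift of `f`: for every lens `l : (W, T) → (Y, R)` and every
function `g : W → X` with `v_l = f ∘ g`, there is a unique lens `μ : (W, T) → (X, R)` with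
`v_μ = g` and `f̄ ∘ μ = l`. -/
theorem view_functor_is_fibration (X Y R : Type) (f : X → Y) :
    ∀ (W T : Type) (l : Lens W T Y R) (g : W → X), l.v = f ∘ g →
      ∃! μ : Lens W T X R, μ.v = g ∧
        (Lens.mk f (fun _ r => r)).comp μ = l := by
  intro W T l g hv
  refine ⟨⟨g, l.u⟩, ⟨rfl, (Lens.cartesianLift_comp_eq_iff f _ l).2 ⟨hv, rfl⟩⟩, ?_⟩
  rintro μ ⟨rfl, hμ⟩
  exact Lens.eq_mk_iff.2 ⟨rfl, ((Lens.cartesianLift_comp_eq_iff f μ l).1 hμ).2.symm⟩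
end

section
/- The functor ⟨V,K⟩ : Lens → Set × Setᵒᵖ, sending a diset (X,S) to the pair (X, X → S) and a lens λ : (X,S) → (Y,R) to the pair (v_λ, K(λ)), is left adjoint to the identity-on-objects functor (-,-) : Set × Setᵒᵖ → Lens that sends a pair of functions (f : X → Y, g : R → S) to the lens with view f and update g ∘ π₂. Explicitly, there is a bijection Hom_{Set×Setᵒᵖ}((X, X → S), (Y, R)) ≅ Hom_Lens((X,S), (Y,R)), natural in (X,S) and (Y,R). -/
/-- The hom-set map `Hom_{Set×Setᵒᵖ}((X, X → S), (Y, R)) → Hom_Lens((X,S), (Y,R))`: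
a pair `(f : X → Y, g : R → (X → S))` is sent to the lens with view `f` and update
`(x, r) ↦ g r x`. -/
def pairToLens (X S Y R : Type) : ((X → Y) × (R → X → S)) → Lens X S Y R :=
  fun fg => ⟨fg.1, fun x r => fg.2 r x⟩

/-! A lens `(X,S) → (Y,R)` is a view `X → Y` together with an update `X × R → S`, and currying
the update turns it into a function `R → (X → S)`, i.e. a morphism `(X → S) → R` of `Setᵒᵖ`.
Naturality holds on the nose: composing lenses threads the update through the view exactly as
the continuation functor `K` does. -/

def lensToPair (X S Y R : Type) (l : Lens X S Y R) : (X → Y) × (R → X → S) :=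
  (l.v, fun r x => l.u x r)

def pairEquivLens (X S Y R : Type) : (X → Y) × (R → X → S) ≃ Lens X S Y R where
  toFun := pairToLens X S Y R
  invFun := lensToPair X S Y R
  left_inv _ := rfl
  right_inv _ := rfl

theorem pairToLens_bijective (X S Y R : Type) : Function.Bijective (pairToLens X S Y R) :=
  (pairEquivLens X S Y R).bijective

theorem pairToLens_naturality_left {X S Y R X' S' : Type} (l : Lens X' S' X S)
    (fg : (X → Y) × (R → X → S)) :
    pairToLens X' S' Y R (fg.1 ∘ l.v, fun r => l.K (fg.2 r)) = (pairToLens X S Y R fg).comp l :=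
  rfl

theorem pairToLens_naturality_right {X S Y R Y' R' : Type} (p : Y → Y') (q : R' → R)
    (fg : (X → Y) × (R → X → S)) :
    pairToLens X S Y' R' (p ∘ fg.1, fun r' => fg.2 (q r')) =
      (Lens.mk p (fun _ r' => q r')).comp (pairToLens X S Y R fg) :=
  rfl

/-- The functor `⟨V,K⟩ : Lens → Set × Setᵒᵖ`, `(X,S) ↦ (X, X → S)`, `λ ↦ (v_λ, K(λ))`, is
left adjoint to the functor `(-,-) : Set × Setᵒᵖ → Lens`, `(f, g) ↦ (f, g ∘ π₂)`:
there is a bijection `Hom_{Set×Setᵒᵖ}((X, X → S), (Y, R)) ≅ Hom_Lens((X,S), (Y,R))`,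
natural in `(X,S)` (via precomposition with `⟨V,K⟩` of a lens) and in `(Y,R)`
(via postcomposition with the lens `(-,-)(p,q)`). -/
theorem viewK_left_adjoint_to_pairing :
    (∀ X S Y R : Type, Function.Bijective (pairToLens X S Y R)) ∧
    (∀ (X S Y R X' S' : Type) (l : Lens X' S' X S) (fg : (X → Y) × (R → X → S)),
      pairToLens X' S' Y R (fg.1 ∘ l.v, fun r => l.K (fg.2 r)) =
        (pairToLens X S Y R fg).comp l) ∧
    (∀ (X S Y R Y' R' : Type) (p : Y → Y') (q : R' → R) (fg : (X → Y) × (R → X → S)),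
      pairToLens X S Y' R' (p ∘ fg.1, fun r' => fg.2 (q r')) =
        (Lens.mk p (fun _ r' => q r')).comp (pairToLens X S Y R fg)) :=
  ⟨pairToLens_bijective, fun _ _ _ _ _ _ => pairToLens_naturality_left,
    fun _ _ _ _ _ _ => pairToLens_naturality_right⟩
end

section
/- In the category Lens, for any family of disets (X_i, S_i)_{i∈I}, the diset (∏_{i∈I} X_i, ∐_{i∈I} S_i) together with the projection lenses π_j : (∏_i X_i, ∐_i S_i) → (X_j, S_j), with view the j-th product projection and update (x, s) ↦ ι_j(s), is a categorical product of the family: for every diset (W,T) and every family of lenses λ_j : (W,T) → (X_j, S_j) there is a unique lens μ : (W,T) → (∏_i X_i, ∐_i S_i) with π_j ∘ μ = λ_j for all j. -/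
namespace Lens

theorem ext {X S Y R : Type} {l m : Lens X S Y R} (hv : l.v = m.v) (hu : l.u = m.u) : l = m := by
  cases l
  cases m
  congr

variable {I : Type} {X S : I → Type} {W T : Type}

def proj (j : I) : Lens (∀ i, X i) (Σ i, S i) (X j) (S j) :=
  ⟨fun x => x j, fun _ s => ⟨j, s⟩⟩

def pi (l : ∀ j, Lens W T (X j) (S j)) : Lens W T (∀ i, X i) (Σ i, S i) :=
  ⟨fun w j => (l j).v w, fun w σ => (l σ.1).u w σ.2⟩

theorem proj_comp_pi (l : ∀ j, Lens W T (X j) (S j)) (j : I) : (proj j).comp (pi l) = l j :=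
  rfl

theorem eq_pi_of_proj_comp (l : ∀ j, Lens W T (X j) (S j)) (μ : Lens W T (∀ i, X i) (Σ i, S i))
    (h : ∀ j, (proj j).comp μ = l j) : μ = pi l := by
  apply Lens.ext
  · funext w j
    exact congrArg (fun m => m.v w) (h j)
  · funext w ⟨j, s⟩
    exact congrArg (fun m => m.u w s) (h j)

end Lens

/-- In `Lens`, the diset `(∏ i, X i, ∐ i, S i)` with the projection lenses
`π j = (x ↦ x j, (x, s) ↦ ι_j s)` is a categorical product of the family `((X i, S i))_i`:
for every diset `(W, T)` and family of lenses `l j : (W, T) → (X j, S j)` there is a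
unique lens `μ : (W, T) → (∏ i, X i, ∐ i, S i)` with `π j ∘ μ = l j` for all `j`. -/
theorem lens_products (I : Type) (X : I → Type) (S : I → Type) :
    ∀ (W T : Type) (l : ∀ j : I, Lens W T (X j) (S j)),
      ∃! μ : Lens W T (∀ i : I, X i) (Σ i : I, S i),
        ∀ j : I, (Lens.mk (fun (x : ∀ i : I, X i) => x j)
          (fun _ (s : S j) => (⟨j, s⟩ : Σ i : I, S i))).comp μ = l j := by
  intro W T l
  exact ⟨Lens.pi l, Lens.proj_comp_pi l, Lens.eq_pi_of_proj_comp l⟩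
end

section
/- Let G : Φ ⇸ Ψ, H : Ψ ⇸ Θ, G' : Φ' ⇸ Ψ', H' : Ψ' ⇸ Θ' be open games, and let α : G → G' and β : H → H' be morphisms of open games with t(α) = s(β). Then the data s(β⊙α) = s(α), t(β⊙α) = t(β), Σ(β⊙α) = Σ(α) × Σ(β) satisfies both morphism axioms, giving a morphism of open games β⊙α : H⊙G → H'⊙G'. -/
/-- An open game `G : (X,S) ⇸ (Y,R)`: a set of strategy profiles, a lens for each
strategy profile, and a best-response relation for each context `(h, k)`. -/
structure OpenGame (X S Y R : Type) where
  Strat : Type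
  play : Strat → Lens X S Y R
  B : X → (Y → R) → Strat → Strat → Prop

namespace OpenGame

/-- A state of an open game over a continuation `k`: a strategy profile `σ` with
`(σ,σ) ∈ B(h,k)` for every history `h`. -/
def IsState {X S Y R : Type} (G : OpenGame X S Y R) (σ : G.Strat) (k : Y → R) : Prop :=
  ∀ h : X, G.B h k σ σ

/-- Sequential composition `H ⊙ G` of open games. -/
def seq {X S Y R Z Q : Type} (G : OpenGame X S Y R) (H : OpenGame Y R Z Q) :
    OpenGame X S Z Q where
  Strat := G.Strat × H.Strat
  play := fun p => (H.play p.2).comp (G.play p.1)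
  B := fun h k p p' =>
    G.B h ((H.play p.2).K k) p.1 p'.1 ∧ H.B ((G.play p.1).v h) k p.2 p'.2

/-- Tensor (simultaneous play) `G₁ ⊗ G₂` of open games. -/
def tensor {X₁ S₁ Y₁ R₁ X₂ S₂ Y₂ R₂ : Type}
    (G₁ : OpenGame X₁ S₁ Y₁ R₁) (G₂ : OpenGame X₂ S₂ Y₂ R₂) :
    OpenGame (X₁ × X₂) (S₁ × S₂) (Y₁ × Y₂) (R₁ × R₂) where
  Strat := G₁.Strat × G₂.Strat
  play := fun p => (G₁.play p.1).tensor (G₂.play p.2)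
  B := fun h k p p' =>
    G₁.B h.1 (fun y => (k (y, (G₂.play p.2).v h.2)).1) p.1 p'.1 ∧
    G₂.B h.2 (fun y' => (k ((G₁.play p.1).v h.1, y')).2) p.2 p'.2

end OpenGame

/-- A (contravariant lens) morphism of open games `α : G → G'`: lenses
`s(α) : Φ' → Φ` and `t(α) : Ψ' → Ψ` and a map on strategy profiles, such that plays are
intertwined and best responses are preserved. -/
structure OGMor {X S Y R X' S' Y' R' : Type}
    (G : OpenGame X S Y R) (G' : OpenGame X' S' Y' R') where
  s : Lens X' S' X S
  t : Lens Y' R' Y R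
  f : G.Strat → G'.Strat
  comm : ∀ σ, (G.play σ).comp s = t.comp (G'.play (f σ))
  best : ∀ h k σ σ', G.B (s.v h) k σ σ' → G'.B h (t.K k) (f σ) (f σ')

/-- Vertical composition of morphisms of open games. -/
def OGMor.vcomp {X S Y R X' S' Y' R' X'' S'' Y'' R'' : Type}
    {G : OpenGame X S Y R} {G' : OpenGame X' S' Y' R'} {G'' : OpenGame X'' S'' Y'' R''}
    (β : OGMor G' G'') (α : OGMor G G') : OGMor G G'' where
  s := α.s.comp β.s
  t := α.t.comp β.t
  f := β.f ∘ α.f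
  comm := by
    intro σ
    show _ = (α.t.comp β.t).comp (G''.play (β.f (α.f σ)))
    rw [← Lens.comp_assoc, α.comm, Lens.comp_assoc, β.comm, ← Lens.comp_assoc]
  best := by
    intro h k σ σ' hB
    exact β.best h (α.t.K k) _ _ (α.best (β.s.v h) k σ σ' hB)

/-!
The morphism axioms of `β ⊙ α` are those of `α` and `β` glued along `t(α) = s(β)`. Plays
are intertwined by associativity of lens composition. For best responses, the history seen
by `H` is `v_{G(σ)}(v_{s(α)} h) = v_{t(α)}(v_{G'(α σ)} h)` by the intertwining of `α`, and the
continuation seen by `G'` is `K(t(α))(K(H(τ)) k) = K(H'(β τ))(K(t(β)) k)` by that of `β`.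
-/

namespace OGMor

section

variable {X S Y R X' S' Y' R' : Type} {G : OpenGame X S Y R} {G' : OpenGame X' S' Y' R'}

theorem play_v_s_v (α : OGMor G G') (σ : G.Strat) (h : X') :
    (G.play σ).v (α.s.v h) = α.t.v ((G'.play (α.f σ)).v h) :=
  congrFun (congrArg Lens.v (α.comm σ)) h

theorem s_K_play_K (α : OGMor G G') (σ : G.Strat) (k : Y → R) :
    α.s.K ((G.play σ).K k) = (G'.play (α.f σ)).K (α.t.K k) := by
  rw [← Lens.K_comp, α.comm, Lens.K_comp]

end

variable {X S Y R Z Q X' S' Y' R' Z' Q' : Type}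
  {G : OpenGame X S Y R} {H : OpenGame Y R Z Q}
  {G' : OpenGame X' S' Y' R'} {H' : OpenGame Y' R' Z' Q'}

theorem seq_play_comm (α : OGMor G G') (β : OGMor H H') (hts : α.t = β.s)
    (σ : G.Strat) (τ : H.Strat) :
    ((H.play τ).comp (G.play σ)).comp α.s =
      β.t.comp ((H'.play (β.f τ)).comp (G'.play (α.f σ))) := by
  rw [Lens.comp_assoc, α.comm, hts, ← Lens.comp_assoc, β.comm, Lens.comp_assoc]

theorem seq_best (α : OGMor G G') (β : OGMor H H') (hts : α.t = β.s)
    (h : X') (k : Z → Q) (p p' : G.Strat × H.Strat)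
    (hB : (G.seq H).B (α.s.v h) k p p') :
    (G'.seq H').B h (β.t.K k) (α.f p.1, β.f p.2) (α.f p'.1, β.f p'.2) := by
  obtain ⟨hG, hH⟩ := hB
  constructor
  · rw [← β.s_K_play_K, ← hts]
    exact α.best h _ _ _ hG
  · apply β.best
    rw [← hts, ← α.play_v_s_v]
    exact hH

def hcomp_s4 (α : OGMor G G') (β : OGMor H H') (hts : α.t = β.s) :
    OGMor (G.seq H) (G'.seq H') where
  s := α.s
  t := β.t
  f := fun p => (α.f p.1, β.f p.2)
  comm := fun p => seq_play_comm α β hts p.1 p.2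
  best := seq_best α β hts

end OGMor

/-- Horizontal composition of morphisms of open games: given morphisms `α : G → G'` and
`β : H → H'` with `t(α) = s(β)`, the data `s(β⊙α) = s(α)`, `t(β⊙α) = t(β)`,
`Σ(β⊙α) = Σ(α) × Σ(β)` satisfies both morphism axioms, giving a morphism of open games
`β⊙α : H⊙G → H'⊙G'`. -/
theorem horizontal_composition_of_morphisms_exists
    {X S Y R Z Q X' S' Y' R' Z' Q' : Type}
    (G : OpenGame X S Y R) (H : OpenGame Y R Z Q)
    (G' : OpenGame X' S' Y' R') (H' : OpenGame Y' R' Z' Q')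
    (α : OGMor G G') (β : OGMor H H') (hts : α.t = β.s) :
    ∃ γ : OGMor (G.seq H) (G'.seq H'),
      γ.s = α.s ∧ γ.t = β.t ∧ γ.f = fun p => (α.f p.1, β.f p.2) :=
  ⟨α.hcomp_s4 β hts, rfl, rfl, rfl⟩
end

section
/- Horizontal composition of morphisms of open games satisfies the interchange law: let Φ →G Ψ →H Θ, Φ' →G' Ψ' →H' Θ' and Φ'' →G'' Ψ'' →H'' Θ'' be open games, and let G →α G' →α' G'' and H →β H' →β' H'' be morphisms of open games with t(α) = s(β) and t(α') = s(β'). Then (β'⊙α') ∘ (β⊙α) = (β'∘β) ⊙ (α'∘α) as morphisms H⊙G → H''⊙G''. -/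
/-- Horizontal composition `β ⊙ α` of morphisms of open games, defined when
`t(α) = s(β)`. -/
def OGMor.hcomp {X S Y R Z Q X' S' Y' R' Z' Q' : Type}
    {G : OpenGame X S Y R} {H : OpenGame Y R Z Q}
    {G' : OpenGame X' S' Y' R'} {H' : OpenGame Y' R' Z' Q'}
    (α : OGMor G G') (β : OGMor H H') (hts : α.t = β.s) :
    OGMor (G.seq H) (G'.seq H') where
  s := α.s
  t := β.t
  f := fun p => (α.f p.1, β.f p.2)
  comm := by
    intro p
    show ((H.play p.2).comp (G.play p.1)).comp α.s
        = β.t.comp ((H'.play (β.f p.2)).comp (G'.play (α.f p.1)))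
    rw [Lens.comp_assoc, α.comm, ← Lens.comp_assoc, hts, β.comm, Lens.comp_assoc]
  best := by
    intro h k p p' hB
    obtain ⟨h1, h2⟩ := hB
    constructor
    · have hb := α.best h ((H.play p.2).K k) p.1 p'.1 h1
      rw [← Lens.K_comp, hts, β.comm, Lens.K_comp] at hb
      exact hb
    · have hv := congrFun (congrArg Lens.v (α.comm p.1)) h
      rw [hts] at hv
      show H'.B ((G'.play (α.f p.1)).v h) (β.t.K k) (β.f p.2) (β.f p'.2)
      refine β.best _ k p.2 p'.2 ?_
      show H.B (Lens.v (β.s.comp (G'.play (α.f p.1))) h) k p.2 p'.2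
      rw [← hv]
      exact h2

theorem OGMor.ext {X S Y R X' S' Y' R' : Type}
    {G : OpenGame X S Y R} {G' : OpenGame X' S' Y' R'} {α β : OGMor G G'}
    (hs : α.s = β.s) (ht : α.t = β.t) (hf : α.f = β.f) : α = β := by
  cases α; cases β; cases hs; cases ht; cases hf; rfl

/-- Interchange law: horizontal and vertical composition of morphisms of open games commute:
`(β'⊙α') ∘ (β⊙α) = (β'∘β) ⊙ (α'∘α)` as morphisms `H⊙G → H''⊙G''`. -/
theorem interchange_law
    {X S Y R Z Q X' S' Y' R' Z' Q' X'' S'' Y'' R'' Z'' Q'' : Type}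
    {G : OpenGame X S Y R} {H : OpenGame Y R Z Q}
    {G' : OpenGame X' S' Y' R'} {H' : OpenGame Y' R' Z' Q'}
    {G'' : OpenGame X'' S'' Y'' R''} {H'' : OpenGame Y'' R'' Z'' Q''}
    (α : OGMor G G') (α' : OGMor G' G'') (β : OGMor H H') (β' : OGMor H' H'')
    (hts : α.t = β.s) (hts' : α'.t = β'.s) :
    (α'.hcomp β' hts').vcomp (α.hcomp β hts) =
      (α'.vcomp α).hcomp (β'.vcomp β)
        (by simp only [OGMor.vcomp, hts, hts']) := by
  -- Both sides have source `α.s ∘ α'.s`, target `β.t ∘ β'.t` and strategy map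
  -- `(Σα' ∘ Σα) × (Σβ' ∘ Σβ)` on the nose.
  exact OGMor.ext rfl rfl rfl
end

section
/- Let Ξ →κ Φ →λ Ψ →μ Θ and Ξ' →κ' Φ' →λ' Ψ' →μ' Θ' be lenses. Then, as functions C(Ξ⊗Ξ', Θ⊗Θ') → C(Φ,Ψ) and C(Ξ⊗Ξ', Θ⊗Θ') → C(Φ',Ψ') respectively, C(κ,μ) ∘ L(μ'∘λ'∘κ') = L(λ') ∘ C(κ⊗κ', μ⊗μ') and C(κ',μ') ∘ R(μ∘λ∘κ) = R(λ) ∘ C(κ⊗κ', μ⊗μ'), where C(κ,μ) : C(Ξ,Θ) → C(Φ,Ψ) is the map (h,k) ↦ (v_κ(h), K(μ)(k)). -/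
/-- A context for the pair of disets `(Φ, Ψ) = ((X,S), (Y,R))`:
`C(Φ,Ψ) = V(Φ) × K(Ψ)`. -/
def Context (X S Y R : Type) : Type := X × (Y → R)

/-- `L(λ') : C(Φ⊗Φ', Ψ⊗Ψ') → C(Φ,Ψ)` for a lens `λ' : Φ' → Ψ'`. -/
def Lmap {X S Y R X' S' Y' R' : Type} (l' : Lens X' S' Y' R')
    (c : Context (X × X') (S × S') (Y × Y') (R × R')) : Context X S Y R :=
  (c.1.1, fun y => (c.2 (y, l'.v c.1.2)).1)

/-- `R(λ) : C(Φ⊗Φ', Ψ⊗Ψ') → C(Φ',Ψ')` for a lens `λ : Φ → Ψ`. -/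
def Rmap {X S Y R X' S' Y' R' : Type} (l : Lens X S Y R)
    (c : Context (X × X') (S × S') (Y × Y') (R × R')) : Context X' S' Y' R' :=
  (c.1.2, fun y' => (c.2 (l.v c.1.1, y')).2)

/-- The action of the context functor `C : Lens × Lensᵒᵖ → Set` on a pair of lenses
`κ : Ξ → Φ`, `μ : Ψ → Θ`: the map `C(Ξ,Θ) → C(Φ,Ψ)`, `(h,k) ↦ (v_κ(h), K(μ)(k))`. -/
def Cmap {XΞ SΞ X S Y R XΘ SΘ : Type} (κ : Lens XΞ SΞ X S) (μ : Lens Y R XΘ SΘ)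
    (c : Context XΞ SΞ XΘ SΘ) : Context X S Y R :=
  (κ.v c.1, μ.K c.2)

/-- The projection lemma: for lenses `Ξ →κ Φ →λ Ψ →μ Θ` and `Ξ' →κ' Φ' →λ' Ψ' →μ' Θ'`,
`C(κ,μ) ∘ L(μ'∘λ'∘κ') = L(λ') ∘ C(κ⊗κ', μ⊗μ')` and
`C(κ',μ') ∘ R(μ∘λ∘κ) = R(λ) ∘ C(κ⊗κ', μ⊗μ')`
as functions `C(Ξ⊗Ξ', Θ⊗Θ') → C(Φ,Ψ)` resp. `C(Ξ⊗Ξ', Θ⊗Θ') → C(Φ',Ψ')`. -/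
theorem projection_lemma
    {XΞ SΞ X S Y R XΘ SΘ XΞ' SΞ' X' S' Y' R' XΘ' SΘ' : Type}
    (κ : Lens XΞ SΞ X S) (lam : Lens X S Y R) (μ : Lens Y R XΘ SΘ)
    (κ' : Lens XΞ' SΞ' X' S') (lam' : Lens X' S' Y' R') (μ' : Lens Y' R' XΘ' SΘ') :
    (∀ c : Context (XΞ × XΞ') (SΞ × SΞ') (XΘ × XΘ') (SΘ × SΘ'),
      Cmap κ μ (Lmap (μ'.comp (lam'.comp κ')) c) =
        Lmap lam' (Cmap (κ.tensor κ') (μ.tensor μ') c)) ∧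
    (∀ c : Context (XΞ × XΞ') (SΞ × SΞ') (XΘ × XΘ') (SΘ × SΘ'),
      Cmap κ' μ' (Rmap (μ.comp (lam.comp κ)) c) =
        Rmap lam (Cmap (κ.tensor κ') (μ.tensor μ') c)) :=
  -- The tensor acts componentwise, so the update of `μ'` (resp. `μ`) lands in the discarded
  -- component and only the views of `κ', λ', μ'` (resp. `κ, λ, μ`) survive on either side.
  ⟨fun _ => rfl, fun _ => rfl⟩
end

section
/- Let α₁ : G₁ → G₁' and α₂ : G₂ → G₂' be morphisms of open games. Then the data s(α₁⊗α₂) = s(α₁) ⊗ s(α₂), t(α₁⊗α₂) = t(α₁) ⊗ t(α₂), Σ(α₁⊗α₂) = Σ(α₁) × Σ(α₂) satisfies both morphism axioms, giving a morphism of open games α₁⊗α₂ : G₁⊗G₂ → G₁'⊗G₂'. -/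
/-!
Tensoring lenses commutes with composition, so the commutation axiom holds factorwise. In
`G₁ ⊗ G₂` each factor sees the other only through the view of its play, and the commutation
axiom of the other morphism identifies that view in `G` (at `s(α).v h`) with the `t(α)`-image
of the view in `G'` (at `h`); so the induced contexts agree and the best-response axioms of
`α₁` and `α₂` apply factorwise.
-/

namespace Lens

theorem tensor_comp_tensor {A B C D A' B' C' D' E F E' F' : Type}
    (b : Lens C D E F) (b' : Lens C' D' E' F') (a : Lens A B C D) (a' : Lens A' B' C' D') :
    (b.tensor b').comp (a.tensor a') = (b.comp a).tensor (b'.comp a') := rfl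

theorem K_tensor_fst {X S Y R X' S' Y' R' : Type} (l : Lens X S Y R) (l' : Lens X' S' Y' R')
    (k : Y × Y' → R × R') (x : X) (x' : X') :
    ((l.tensor l').K k (x, x')).1 = l.K (fun y => (k (y, l'.v x')).1) x := rfl

theorem K_tensor_snd {X S Y R X' S' Y' R' : Type} (l : Lens X S Y R) (l' : Lens X' S' Y' R')
    (k : Y × Y' → R × R') (x : X) (x' : X') :
    ((l.tensor l').K k (x, x')).2 = l'.K (fun y' => (k (l.v x, y')).2) x' := rfl

end Lens

namespace OGMor

variable {X₁ S₁ Y₁ R₁ X₂ S₂ Y₂ R₂ X₁' S₁' Y₁' R₁' X₂' S₂' Y₂' R₂' : Type}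
  {G₁ : OpenGame X₁ S₁ Y₁ R₁} {G₂ : OpenGame X₂ S₂ Y₂ R₂}
  {G₁' : OpenGame X₁' S₁' Y₁' R₁'} {G₂' : OpenGame X₂' S₂' Y₂' R₂'}

theorem play_v_s_v_s8 (α : OGMor G₁ G₁') (σ : G₁.Strat) (x : X₁') :
    (G₁.play σ).v (α.s.v x) = α.t.v ((G₁'.play (α.f σ)).v x) :=
  congrArg (fun l => Lens.v l x) (α.comm σ)

theorem tensor_comm (α₁ : OGMor G₁ G₁') (α₂ : OGMor G₂ G₂') (σ : (G₁.tensor G₂).Strat) :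
    ((G₁.tensor G₂).play σ).comp (α₁.s.tensor α₂.s) =
      (α₁.t.tensor α₂.t).comp ((G₁'.tensor G₂').play (α₁.f σ.1, α₂.f σ.2)) := by
  simp only [OpenGame.tensor, Lens.tensor_comp_tensor, α₁.comm, α₂.comm]

theorem tensor_best (α₁ : OGMor G₁ G₁') (α₂ : OGMor G₂ G₂') (h : X₁' × X₂')
    (k : Y₁ × Y₂ → R₁ × R₂) (σ σ' : (G₁.tensor G₂).Strat)
    (hB : (G₁.tensor G₂).B ((α₁.s.tensor α₂.s).v h) k σ σ') :
    (G₁'.tensor G₂').B h ((α₁.t.tensor α₂.t).K k) (α₁.f σ.1, α₂.f σ.2)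
      (α₁.f σ'.1, α₂.f σ'.2) := by
  obtain ⟨hB₁, hB₂⟩ := hB
  refine ⟨?_, ?_⟩
  · simp only [Lens.K_tensor_fst]
    exact α₁.best _ _ _ _ (by rwa [← α₂.play_v_s_v_s8])
  · simp only [Lens.K_tensor_snd]
    exact α₂.best _ _ _ _ (by rwa [← α₁.play_v_s_v_s8])

def tensor (α₁ : OGMor G₁ G₁') (α₂ : OGMor G₂ G₂') : OGMor (G₁.tensor G₂) (G₁'.tensor G₂') where
  s := α₁.s.tensor α₂.s
  t := α₁.t.tensor α₂.t
  f := fun p => (α₁.f p.1, α₂.f p.2)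
  comm := α₁.tensor_comm α₂
  best := α₁.tensor_best α₂

end OGMor

/-- Tensor of morphisms of open games: given morphisms `α₁ : G₁ → G₁'` and `α₂ : G₂ → G₂'`,
the data `s(α₁⊗α₂) = s(α₁) ⊗ s(α₂)`, `t(α₁⊗α₂) = t(α₁) ⊗ t(α₂)`,
`Σ(α₁⊗α₂) = Σ(α₁) × Σ(α₂)` satisfies both morphism axioms, giving a morphism of open games
`α₁⊗α₂ : G₁⊗G₂ → G₁'⊗G₂'`. -/
theorem tensor_of_morphisms_exists
    {X₁ S₁ Y₁ R₁ X₂ S₂ Y₂ R₂ X₁' S₁' Y₁' R₁' X₂' S₂' Y₂' R₂' : Type}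
    (G₁ : OpenGame X₁ S₁ Y₁ R₁) (G₂ : OpenGame X₂ S₂ Y₂ R₂)
    (G₁' : OpenGame X₁' S₁' Y₁' R₁') (G₂' : OpenGame X₂' S₂' Y₂' R₂')
    (α₁ : OGMor G₁ G₁') (α₂ : OGMor G₂ G₂') :
    ∃ γ : OGMor (G₁.tensor G₂) (G₁'.tensor G₂'),
      γ.s = α₁.s.tensor α₂.s ∧ γ.t = α₁.t.tensor α₂.t ∧
        γ.f = fun p => (α₁.f p.1, α₂.f p.2) :=
  ⟨α₁.tensor α₂, rfl, rfl, rfl⟩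
end

section
/- Let G₁ : Φ₁ ⇸ Ψ₁, G₂ : Φ₂ ⇸ Ψ₂, H₁ : Ψ₁ ⇸ Θ₁, H₂ : Ψ₂ ⇸ Θ₂ be open games. Then the open games (H₁⊗H₂)⊙(G₁⊗G₂) and (H₁⊙G₁)⊗(H₂⊙G₂) (both of type Φ₁⊗Φ₂ ⇸ Θ₁⊗Θ₂) are isomorphic via the middle-four interchange bijection ((σ₁,σ₂),(τ₁,τ₂)) ↦ ((σ₁,τ₁),(σ₂,τ₂)) of strategy profiles: (a) the corresponding lenses agree, i.e. (H₁(τ₁)⊗H₂(τ₂)) ∘ (G₁(σ₁)⊗G₂(σ₂)) = (H₁(τ₁)∘G₁(σ₁)) ⊗ (H₂(τ₂)∘G₂(σ₂)); and (b) for every context c, (((σ₁,σ₂),(τ₁,τ₂)), ((σ₁',σ₂'),(τ₁',τ₂'))) ∈ B_{(H₁⊗H₂)⊙(G₁⊗G₂)}(c) if and only if (((σ₁,τ₁),(σ₂,τ₂)), ((σ₁',τ₁'),(σ₂',τ₂'))) ∈ B_{(H₁⊙G₁)⊗(H₂⊙G₂)}(c). -/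
theorem Lens.tensor_comp_tensor_s9 {X S Y R Z Q X' S' Y' R' Z' Q' : Type}
    (m : Lens Y R Z Q) (m' : Lens Y' R' Z' Q') (l : Lens X S Y R) (l' : Lens X' S' Y' R') :
    (m.tensor m').comp (l.tensor l') = (m.comp l).tensor (m'.comp l') :=
  rfl

namespace OpenGame

variable {X₁ S₁ Y₁ R₁ Z₁ Q₁ X₂ S₂ Y₂ R₂ Z₂ Q₂ : Type}
  (G₁ : OpenGame X₁ S₁ Y₁ R₁) (G₂ : OpenGame X₂ S₂ Y₂ R₂)
  (H₁ : OpenGame Y₁ R₁ Z₁ Q₁) (H₂ : OpenGame Y₂ R₂ Z₂ Q₂)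

/-- Both sides unfold to the same four best-response conditions (the continuations agree
definitionally), bracketed differently. -/
theorem seq_tensor_B_iff_tensor_seq_B (h : X₁ × X₂) (k : Z₁ × Z₂ → Q₁ × Q₂)
    (σ σ' : G₁.Strat × G₂.Strat) (τ τ' : H₁.Strat × H₂.Strat) :
    ((G₁.tensor G₂).seq (H₁.tensor H₂)).B h k (σ, τ) (σ', τ') ↔
      ((G₁.seq H₁).tensor (G₂.seq H₂)).B h k ((σ.1, τ.1), (σ.2, τ.2))
        ((σ'.1, τ'.1), (σ'.2, τ'.2)) :=
  and_and_and_comm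

end OpenGame

/-- Middle-four interchange for open games: `(H₁⊗H₂)⊙(G₁⊗G₂)` and `(H₁⊙G₁)⊗(H₂⊙G₂)`
are isomorphic via the bijection `((σ₁,σ₂),(τ₁,τ₂)) ↦ ((σ₁,τ₁),(σ₂,τ₂))` of strategy
profiles: the corresponding lenses agree, and best responses correspond in every context. -/
theorem middle_four_interchange
    {X₁ S₁ Y₁ R₁ Z₁ Q₁ X₂ S₂ Y₂ R₂ Z₂ Q₂ : Type}
    (G₁ : OpenGame X₁ S₁ Y₁ R₁) (G₂ : OpenGame X₂ S₂ Y₂ R₂)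
    (H₁ : OpenGame Y₁ R₁ Z₁ Q₁) (H₂ : OpenGame Y₂ R₂ Z₂ Q₂) :
    -- (a) the lenses agree
    (∀ (σ₁ : G₁.Strat) (σ₂ : G₂.Strat) (τ₁ : H₁.Strat) (τ₂ : H₂.Strat),
      ((H₁.play τ₁).tensor (H₂.play τ₂)).comp ((G₁.play σ₁).tensor (G₂.play σ₂)) =
        ((H₁.play τ₁).comp (G₁.play σ₁)).tensor ((H₂.play τ₂).comp (G₂.play σ₂))) ∧
    -- (b) best responses correspond in every context
    (∀ (h : X₁ × X₂) (k : Z₁ × Z₂ → Q₁ × Q₂)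
      (σ₁ σ₁' : G₁.Strat) (σ₂ σ₂' : G₂.Strat) (τ₁ τ₁' : H₁.Strat) (τ₂ τ₂' : H₂.Strat),
      ((G₁.tensor G₂).seq (H₁.tensor H₂)).B h k ((σ₁, σ₂), (τ₁, τ₂)) ((σ₁', σ₂'), (τ₁', τ₂'))
        ↔
      ((G₁.seq H₁).tensor (G₂.seq H₂)).B h k ((σ₁, τ₁), (σ₂, τ₂)) ((σ₁', τ₁'), (σ₂', τ₂'))) :=
  ⟨fun _ _ _ _ => Lens.tensor_comp_tensor_s9 _ _ _ _,
    fun h k σ₁ σ₁' σ₂ σ₂' τ₁ τ₁' τ₂ τ₂' =>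
      OpenGame.seq_tensor_B_iff_tensor_seq_B G₁ G₂ H₁ H₂ h k
        (σ₁, σ₂) (σ₁', σ₂') (τ₁, τ₂) (τ₁', τ₂')⟩
end

section
/- Backward induction for states: let G : Φ ⇸ Ψ and H : Ψ ⇸ Θ be open games, let τ be a state of H over k ∈ K(Θ), and let σ be a state of G over K(H(τ))(k) ∈ K(Ψ). Then (σ,τ) is a state of H⊙G over k. -/
/-- Backward induction for states: if `τ` is a state of `H` over `k` and `σ` is a state of
`G` over `K(H(τ))(k)`, then `(σ, τ)` is a state of `H⊙G` over `k`. -/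
theorem backward_induction
    {X S Y R Z Q : Type}
    (G : OpenGame X S Y R) (H : OpenGame Y R Z Q)
    (τ : H.Strat) (k : Z → Q) (σ : G.Strat)
    (hτ : H.IsState τ k) (hσ : G.IsState σ ((H.play τ).K k)) :
    (G.seq H).IsState (σ, τ) k :=
  fun h => ⟨hσ h, hτ _⟩
end

section
/- Let G₁ : Φ₁ ⇸ Ψ₁ and G₂ : Φ₂ ⇸ Ψ₂ be open games, let σ₁ be a state of G₁ over k₁ ∈ K(Ψ₁) and σ₂ a state of G₂ over k₂ ∈ K(Ψ₂). Then (σ₁,σ₂) is a state of G₁⊗G₂ over the continuation k₁⊗k₂ ∈ K(Ψ₁⊗Ψ₂) given by (k₁⊗k₂)(y₁,y₂) = (k₁(y₁), k₂(y₂)). -/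
/-- States are closed under tensor: if `σ₁` is a state of `G₁` over `k₁` and `σ₂` is a
state of `G₂` over `k₂`, then `(σ₁, σ₂)` is a state of `G₁⊗G₂` over `k₁⊗k₂`, where
`(k₁⊗k₂)(y₁,y₂) = (k₁(y₁), k₂(y₂))`. -/
theorem tensor_of_states
    {X₁ S₁ Y₁ R₁ X₂ S₂ Y₂ R₂ : Type}
    (G₁ : OpenGame X₁ S₁ Y₁ R₁) (G₂ : OpenGame X₂ S₂ Y₂ R₂)
    (σ₁ : G₁.Strat) (k₁ : Y₁ → R₁) (σ₂ : G₂.Strat) (k₂ : Y₂ → R₂)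
    (h₁ : G₁.IsState σ₁ k₁) (h₂ : G₂.IsState σ₂ k₂) :
    (G₁.tensor G₂).IsState (σ₁, σ₂) (fun y => (k₁ y.1, k₂ y.2)) :=
  -- Restricting `k₁ ⊗ k₂` to either factor gives back `k₁` resp. `k₂` definitionally,
  -- whatever the other player's view is.
  fun h => ⟨h₁ h.1, h₂ h.2⟩
end

section
/- Let n ≥ 1, let Y₁,…,Y_n be sets, and let k : ∏_{i=1}^n Yᵢ → ℝⁿ. Under the canonical bijection Σ(⊗_{i=1}^n D_{1,Yᵢ}) ≅ ∏_{i=1}^n Yᵢ (and the canonical identifications of the iterated monoidal unit), a strategy profile σ ∈ ∏ᵢ Yᵢ is a state of the iterated tensor ⊗_{i=1}^n D_{1,Yᵢ} : I ⇸ (∏ᵢ Yᵢ, ℝⁿ) over k if and only if σ is a pure Nash equilibrium of the n-player normal form game with payoff function k; that is, iff for every player 1 ≤ j ≤ n and every yⱼ ∈ Yⱼ, (k(σ))ⱼ ≥ (k(yⱼ, σ_{-j}))ⱼ, where (yⱼ, σ_{-j}) is σ with its j-th component replaced by yⱼ. -/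
/-- Relabel an open game along bijections of its boundary sets and of its set of strategy
profiles (canonical identification of open games). -/
def OpenGame.reindex {X S Y R X' S' Y' R' : Type} (G : OpenGame X S Y R)
    (eX : X ≃ X') (eS : S ≃ S') (eY : Y ≃ Y') (eR : R ≃ R')
    {T : Type} (eT : G.Strat ≃ T) : OpenGame X' S' Y' R' where
  Strat := T
  play := fun σ =>
    ⟨fun x' => eY ((G.play (eT.symm σ)).v (eX.symm x')),
     fun x' r' => eS ((G.play (eT.symm σ)).u (eX.symm x') (eR.symm r'))⟩
  B := fun h k σ σ' =>
    G.B (eX.symm h) (fun y => eR.symm (k (eY y))) (eT.symm σ) (eT.symm σ')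

/-- The decision open game `D_{X,Y} : (X,1) ⇸ (Y,ℝ)`. -/
def decision (X Y : Type) : OpenGame X PUnit Y ℝ where
  Strat := X → Y
  play := fun σ => ⟨σ, fun _ _ => PUnit.unit⟩
  B := fun h k _ σ'' => ∀ y : Y, k (σ'' h) ≥ k y

/-- The canonical equivalence `(∏ i : Fin n, Y (castSucc i)) × Y (last n) ≃ ∏ i : Fin (n+1), Y i`
given by `Fin.snoc`. -/
def snocEquiv {n : ℕ} (Y : Fin (n + 1) → Type) :
    ((∀ i : Fin n, Y i.castSucc) × Y (Fin.last n)) ≃ (∀ i : Fin (n + 1), Y i) where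
  toFun p := Fin.snoc p.1 p.2
  invFun f := (fun i => f i.castSucc, f (Fin.last n))
  left_inv p := by
    obtain ⟨a, b⟩ := p
    simp
  right_inv f := by
    funext i
    induction i using Fin.lastCases with
    | last => simp
    | cast j => simp

/-- The iterated tensor `⊗_{i=1}^n D_{1,Y i} : I ⇸ (∏ i, Y i, ℝⁿ)`, built by recursion
using the binary tensor of open games and the canonical identifications of the boundary
disets, together with the canonical bijection of its strategy profiles with `∏ i, Y i`. -/
def nashAux : (n : ℕ) → (Y : Fin n → Type) →
    (G : OpenGame PUnit PUnit (∀ i, Y i) (Fin n → ℝ)) ×' (G.Strat ≃ (∀ i, Y i))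
  | 0, Y =>
    ⟨{ Strat := PUnit
       play := fun _ => ⟨fun _ => (fun i => i.elim0), fun _ _ => PUnit.unit⟩
       B := fun _ _ _ _ => True },
     Equiv.ofUnique PUnit (∀ i : Fin 0, Y i)⟩
  | n + 1, Y =>
    let p := nashAux n (fun i => Y i.castSucc)
    ⟨(p.1.tensor (decision PUnit (Y (Fin.last n)))).reindex
        (Equiv.prodPUnit PUnit) (Equiv.prodPUnit PUnit)
        (snocEquiv Y) (snocEquiv (fun _ => ℝ))
        ((p.2.prodCongr (Equiv.funUnique PUnit (Y (Fin.last n)))).trans (snocEquiv Y)),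
     Equiv.refl _⟩

/-! The tensor of a game with a decision is in a state exactly when the first factor is in a
state against the continuation in which the decision's move is held fixed, and the decision
picks a best response to the moves of the first factor. Splitting a profile of `n + 1` players
as `Fin.snoc (Fin.init σ) (σ (Fin.last n))`, this is the same recursion that characterises pure
Nash equilibria: the first `n` players are in equilibrium in the game with the last move fixed,
and the last player best responds. Induction on `n` finishes the proof. -/

@[simp]
theorem snocEquiv_apply {n : ℕ} {Y : Fin (n + 1) → Type}
    (p : (∀ i : Fin n, Y i.castSucc) × Y (Fin.last n)) :
    snocEquiv Y p = Fin.snoc p.1 p.2 :=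
  rfl

@[simp]
theorem snocEquiv_symm_apply {n : ℕ} {Y : Fin (n + 1) → Type} (f : ∀ i, Y i) :
    (snocEquiv Y).symm f = (fun i : Fin n => f i.castSucc, f (Fin.last n)) :=
  rfl

namespace OpenGame

theorem isState_reindex_iff {X S Y R X' S' Y' R' T : Type} (G : OpenGame X S Y R)
    (eX : X ≃ X') (eS : S ≃ S') (eY : Y ≃ Y') (eR : R ≃ R') (eT : G.Strat ≃ T)
    (σ : T) (k : Y' → R') :
    (G.reindex eX eS eY eR eT).IsState σ k ↔
      G.IsState (eT.symm σ) (fun y => eR.symm (k (eY y))) :=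
  (eX.forall_congr_left (p := fun h => G.B h _ _ _)).symm

theorem isState_tensor_iff {X₁ S₁ Y₁ R₁ X₂ S₂ Y₂ R₂ : Type}
    (G₁ : OpenGame X₁ S₁ Y₁ R₁) (G₂ : OpenGame X₂ S₂ Y₂ R₂)
    (σ₁ : G₁.Strat) (σ₂ : G₂.Strat) (k : Y₁ × Y₂ → R₁ × R₂) :
    (G₁.tensor G₂).IsState (σ₁, σ₂) k ↔
      (∀ h₂, G₁.IsState σ₁ (fun y => (k (y, (G₂.play σ₂).v h₂)).1)) ∧
        ∀ h₁, G₂.IsState σ₂ (fun y' => (k ((G₁.play σ₁).v h₁, y')).2) := by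
  simp only [IsState, tensor, Prod.forall, forall_and]
  exact and_congr forall_comm Iff.rfl

end OpenGame

@[simp]
theorem decision_play_v {X Y : Type} (σ : X → Y) : ((decision X Y).play σ).v = σ :=
  rfl

theorem decision_isState_iff {X Y : Type} (σ : X → Y) (k : Y → ℝ) :
    (decision X Y).IsState σ k ↔ ∀ h y, k (σ h) ≥ k y :=
  Iff.rfl

theorem nashAux_play_v : ∀ (n : ℕ) (Y : Fin n → Type) (τ : (nashAux n Y).1.Strat)
    (h : PUnit), ((nashAux n Y).1.play τ).v h = (nashAux n Y).2 τ
  | 0, _, _, _ => funext fun i => i.elim0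
  | n + 1, Y, τ, _ => by
    show Fin.snoc (((nashAux n _).1.play ((nashAux n _).2.symm (Fin.init τ))).v _)
      (τ (Fin.last n)) = τ
    rw [nashAux_play_v, Equiv.apply_symm_apply]
    exact Fin.snoc_init_self (α := Y) τ

def IsPureNashEquilibrium {n : ℕ} {Y : Fin n → Type} (k : (∀ i, Y i) → Fin n → ℝ)
    (σ : ∀ i, Y i) : Prop :=
  ∀ (j : Fin n) (y : Y j), k σ j ≥ k (Function.update σ j y) j

theorem isPureNashEquilibrium_succ_iff {n : ℕ} {Y : Fin (n + 1) → Type}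
    (k : (∀ i, Y i) → Fin (n + 1) → ℝ) (σ : ∀ i, Y i) :
    IsPureNashEquilibrium k σ ↔
      IsPureNashEquilibrium (fun a i => k (Fin.snoc a (σ (Fin.last n))) i.castSucc)
          (Fin.init σ) ∧
        ∀ y, k σ (Fin.last n) ≥ k (Fin.snoc (Fin.init σ) y) (Fin.last n) := by
  unfold IsPureNashEquilibrium
  rw [Fin.forall_fin_succ']
  refine and_congr (forall_congr' fun j => forall_congr' fun y => ?_) (forall_congr' fun y => ?_)
  · beta_reduce
    rw [Fin.snoc_update, Fin.snoc_init_self]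
  · rw [← Fin.update_snoc_last (σ (Fin.last n)), Fin.snoc_init_self]

theorem nashAux_isState_iff : ∀ (n : ℕ) (Y : Fin n → Type) (k : (∀ i, Y i) → Fin n → ℝ)
    (σ : ∀ i, Y i),
    (nashAux n Y).1.IsState ((nashAux n Y).2.symm σ) k ↔ IsPureNashEquilibrium k σ
  | 0, _, _, _ => iff_of_true (fun _ => trivial) (fun j => j.elim0)
  | n + 1, Y, k, σ => by
    rw [isPureNashEquilibrium_succ_iff, ← nashAux_isState_iff n]
    show OpenGame.IsState (OpenGame.reindex _ _ _ _ _ _) σ k ↔ _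
    refine (OpenGame.isState_reindex_iff _ _ _ _ _ _ σ k).trans ?_
    refine (OpenGame.isState_tensor_iff _ (decision PUnit (Y (Fin.last n)))
      ((nashAux n _).2.symm (Fin.init σ)) (fun _ => σ (Fin.last n)) _).trans ?_
    simp only [nashAux_play_v, Equiv.apply_symm_apply, decision_play_v, decision_isState_iff,
      snocEquiv_apply, snocEquiv_symm_apply, Fin.snoc_init_self, forall_const]

theorem states_of_tensor_of_decisions_are_nash_equilibria_general
    (n : ℕ) (Y : Fin n → Type)
    (k : (∀ i, Y i) → (Fin n → ℝ)) (σ : ∀ i, Y i) :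
    (nashAux n Y).1.IsState ((nashAux n Y).2.symm σ) k ↔
      ∀ (j : Fin n) (y : Y j), k σ j ≥ k (Function.update σ j y) j :=
  nashAux_isState_iff n Y k σ

/-- Let `n ≥ 1`, let `Y₁,…,Y_n` be sets and `k : ∏ i, Y i → ℝⁿ`. Under the canonical
bijection of strategy profiles, `σ : ∏ i, Y i` is a state of the iterated tensor
`⊗_{i=1}^n D_{1,Y i} : I ⇸ (∏ i, Y i, ℝⁿ)` over `k` if and only if `σ` is a pure Nash
equilibrium of the `n`-player normal form game with payoff function `k`. -/
theorem states_of_tensor_of_decisions_are_nash_equilibria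
    (n : ℕ) (hn : 1 ≤ n) (Y : Fin n → Type)
    (k : (∀ i, Y i) → (Fin n → ℝ)) (σ : ∀ i, Y i) :
    (nashAux n Y).1.IsState ((nashAux n Y).2.symm σ) k ↔
      ∀ (j : Fin n) (y : Y j), k σ j ≥ k (Function.update σ j y) j :=
  states_of_tensor_of_decisions_are_nash_equilibria_general n Y k σ
end

section
/- Let n ≥ 1, let X₁,…,X_n be sets, and let k : ∏_{i=1}^n Xᵢ → ℝⁿ. For σ ∈ ∏_{i=1}^n (∏_{j<i} Xⱼ → Xᵢ), define continuations k_n := k and k_{i-1} := K(D^Δ_{X₁,…,Xᵢ}(σᵢ))(kᵢ) for 1 ≤ i ≤ n, i.e. k_{i-1}(x) = (kᵢ(x, σᵢ(x))₁, …, kᵢ(x, σᵢ(x))_{i-1}). Then each σᵢ is a state of D^Δ_{X₁,…,Xᵢ} over kᵢ for every 1 ≤ i ≤ n (equivalently, σ arises from a ⊙-separable state ⊙_{i=1}^n αᵢ of ⊙_{i=1}^n D^Δ_{X₁,…,Xᵢ} over k with each αᵢ a state of D^Δ_{X₁,…,Xᵢ}) if and only if σ is a subgame perfect equilibrium of the n-player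 sequential game with payoff function k: for all 1 ≤ i ≤ n, all x ∈ ∏_{j<i} Xⱼ and all xᵢ ∈ Xᵢ, k(v^σ_{x,σᵢ(x)})ᵢ ≥ k(v^σ_{x,xᵢ})ᵢ. -/
/-- Strategy profiles of an `n`-player sequential game with choice sets `X i`:
for each `i`, a function `∏_{j<i} X j → X i`. -/
def SeqStrat (n : ℕ) (X : Fin n → Type) : Type :=
  ∀ i : Fin n, ((∀ j : Fin i.val, X (Fin.castLT j (j.isLt.trans i.isLt))) → X i)

/-- The strategic extension `v^σ` (auxiliary version, by course-of-values recursion). -/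
def extendAux {n : ℕ} {X : Fin n → Type} (σ : SeqStrat n X) :
    (m : ℕ) → (h : m < n) → X ⟨m, h⟩
  | m, h => σ ⟨m, h⟩ (fun j => extendAux σ j.val (j.isLt.trans h))
  termination_by m _ => m

/-- The strategic extension `v^σ` of the empty play: the play in which every player `i`
follows the strategy `σ i`. -/
def extendPlay {n : ℕ} {X : Fin n → Type} (σ : SeqStrat n X) : ∀ i : Fin n, X i :=
  fun i => extendAux σ i.val i.isLt

/-- The strategic extension `v^σ_{x, xi}` of the partial play `(x, xi)`, where `x` is a
partial play of length `i` and `xi` is the move played at position `i`; all later moves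
follow `σ` (auxiliary version). -/
def deviateAux {n : ℕ} {X : Fin n → Type} (σ : SeqStrat n X) (i : Fin n)
    (x : ∀ j : Fin i.val, X (Fin.castLT j (j.isLt.trans i.isLt))) (xi : X i) :
    (m : ℕ) → (h : m < n) → X ⟨m, h⟩
  | m, h =>
    if hm : m < i.val then x ⟨m, hm⟩
    else if hm' : m = i.val then
      cast (congrArg X (show i = (⟨m, h⟩ : Fin n) from Fin.ext hm'.symm)) xi
    else σ ⟨m, h⟩ (fun j => deviateAux σ i x xi j.val (j.isLt.trans h))
  termination_by m _ => m

/-- The strategic extension `v^σ_{x, xi}`. -/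
def deviatePlay {n : ℕ} {X : Fin n → Type} (σ : SeqStrat n X) (i : Fin n)
    (x : ∀ j : Fin i.val, X (Fin.castLT j (j.isLt.trans i.isLt))) (xi : X i) :
    ∀ l : Fin n, X l :=
  fun l => deviateAux σ i x xi l.val l.isLt

/-- The open game `D^Δ_{X₁,…,X_{n+1}} : (∏_{i≤n} X i, ℝⁿ) ⇸ (∏_{i≤n+1} X i, ℝ^{n+1})`. -/
def DDelta (n : ℕ) (X : Fin (n + 1) → Type) :
    OpenGame (∀ i : Fin n, X i.castSucc) (Fin n → ℝ)
      (∀ i : Fin (n + 1), X i) (Fin (n + 1) → ℝ) where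
  Strat := (∀ i : Fin n, X i.castSucc) → X (Fin.last n)
  play := fun σ => ⟨fun x => Fin.snoc x (σ x), fun _ r => fun i => r i.castSucc⟩
  B := fun h k _ σ'' => ∀ xn : X (Fin.last n),
    k (Fin.snoc h (σ'' h)) (Fin.last n) ≥ k (Fin.snoc h xn) (Fin.last n)

/-- The continuations `k_m` for `0 ≤ m ≤ n`, defined by downward recursion from `k_n = k`
by `k_{m}(x) = (k_{m+1}(x, σ_{m+1}(x))_1, …, k_{m+1}(x, σ_{m+1}(x))_m)`, i.e.
`k_m = K(D^Δ(σ_{m+1}))(k_{m+1})`. -/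
def conts {n : ℕ} (X : Fin n → Type) (k : (∀ i, X i) → (Fin n → ℝ)) (σ : SeqStrat n X) :
    (m : ℕ) → (hm : m ≤ n) →
      ((∀ j : Fin m, X (Fin.castLT j (j.isLt.trans_le hm))) → (Fin m → ℝ))
  | m, hm =>
    if heq : m = n then
      fun x i => k (fun l => x ⟨l.val, by omega⟩) ⟨i.val, by omega⟩
    else
      have hlt : m < n := lt_of_le_of_ne hm heq
      fun x i =>
        conts X k σ (m + 1) hlt
          (fun j =>
            if hj : j.val < m then x ⟨j.val, hj⟩
            else
              cast (congrArg X (show (⟨m, hlt⟩ : Fin n) = _ from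
                Fin.ext (by have := j.isLt; simp; omega))) (σ ⟨m, hlt⟩ x))
          ⟨i.val, Nat.lt_succ_of_lt i.isLt⟩
  termination_by m _ => n - m

/-!
Unwinding the downward recursion, the continuation `k_m` evaluated at a partial play `x` of
length `m` is `k` evaluated at the strategic extension `v^σ_x`, restricted to the first `m`
players. For `x` of length `i` followed by a move `xᵢ` this extension is `v^σ_{x,xᵢ}`, so the
best-response condition of `D^Δ` at stage `i` is literally the subgame-perfection inequality
for player `i`.
-/

namespace SeqStrat

variable {n : ℕ} {X : Fin n → Type}

/-- The strategic extension `v^σ_x` of a partial play `x` of length `m`. -/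
def extendFrom (σ : SeqStrat n X) (m : ℕ) (hm : m ≤ n)
    (x : ∀ j : Fin m, X ⟨j.val, j.isLt.trans_le hm⟩) :
    (l : ℕ) → (hl : l < n) → X ⟨l, hl⟩
  | l, hl =>
    if h : l < m then x ⟨l, h⟩
    else σ ⟨l, hl⟩ (fun j => extendFrom σ m hm x j.val (j.isLt.trans hl))
  termination_by l _ => l

theorem extendFrom_of_lt (σ : SeqStrat n X) {m : ℕ} (hm : m ≤ n)
    (x : ∀ j : Fin m, X ⟨j.val, j.isLt.trans_le hm⟩) {l : ℕ} (hl : l < n) (h : l < m) :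
    σ.extendFrom m hm x l hl = x ⟨l, h⟩ := by
  rw [extendFrom, dif_pos h]

theorem extendFrom_of_le (σ : SeqStrat n X) {m : ℕ} (hm : m ≤ n)
    (x : ∀ j : Fin m, X ⟨j.val, j.isLt.trans_le hm⟩) {l : ℕ} (hl : l < n) (h : m ≤ l) :
    σ.extendFrom m hm x l hl =
      σ ⟨l, hl⟩ (fun j => σ.extendFrom m hm x j.val (j.isLt.trans hl)) := by
  rw [extendFrom, dif_neg (Nat.not_lt.mpr h)]

-- `x'` is `x` followed by `σ`'s move, given pointwise to match the `dite`/`cast` form in `conts`.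
theorem extendFrom_succ (σ : SeqStrat n X) {m : ℕ} (hlt : m < n)
    (x : ∀ j : Fin m, X ⟨j.val, j.isLt.trans hlt⟩)
    (x' : ∀ j : Fin (m + 1), X ⟨j.val, j.isLt.trans_le hlt⟩)
    (hx : ∀ (j : ℕ) (hj : j < m), x' ⟨j, hj.trans (Nat.lt_succ_self m)⟩ = x ⟨j, hj⟩)
    (hx' : x' ⟨m, Nat.lt_succ_self m⟩ = σ ⟨m, hlt⟩ x) (l : ℕ) (hl : l < n) :
    σ.extendFrom (m + 1) hlt x' l hl = σ.extendFrom m hlt.le x l hl := by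
  induction l using Nat.strong_induction_on with
  | _ l IH =>
    rcases lt_trichotomy l m with h | rfl | h
    · rw [extendFrom_of_lt _ _ _ _ h, extendFrom_of_lt _ _ _ _ (h.trans (Nat.lt_succ_self m)), hx]
    · rw [extendFrom_of_lt _ _ _ _ (Nat.lt_succ_self l), hx', extendFrom_of_le _ _ _ _ le_rfl]
      congr 1
      funext j
      rw [extendFrom_of_lt _ _ _ _ j.isLt]
    · rw [extendFrom_of_le _ _ _ _ h, extendFrom_of_le _ _ _ _ h.le]
      congr 1
      funext j
      exact IH j.val j.isLt (j.isLt.trans hl)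

theorem extendFrom_snoc (σ : SeqStrat n X) (i : Fin n)
    (x : ∀ j : Fin i.val, X ⟨j.val, j.isLt.trans i.isLt⟩) (xi : X i) (l : ℕ) (hl : l < n) :
    σ.extendFrom (i.val + 1) i.isLt
        (Fin.snoc (α := fun j : Fin (i.val + 1) => X ⟨j.val, j.isLt.trans_le i.isLt⟩) x xi)
        l hl = deviateAux σ i x xi l hl := by
  induction l using Nat.strong_induction_on with
  | _ l IH =>
    rw [deviateAux]
    rcases lt_trichotomy l i.val with h | rfl | h
    · rw [dif_pos h, σ.extendFrom_of_lt _ _ _ (h.trans (Nat.lt_succ_self _))]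
      exact Fin.snoc_castSucc
        (α := fun j : Fin (i.val + 1) => X ⟨j.val, j.isLt.trans_le i.isLt⟩) xi x ⟨l, h⟩
    · rw [dif_neg (lt_irrefl _), dif_pos rfl, σ.extendFrom_of_lt _ _ _ (Nat.lt_succ_self _)]
      exact (Fin.snoc_last (α := fun j : Fin (i.val + 1) => X ⟨j.val, j.isLt.trans_le i.isLt⟩)
        xi x).trans (cast_eq _ _).symm
    · rw [dif_neg (by omega), dif_neg h.ne', σ.extendFrom_of_le _ _ _ h]
      congr 1
      funext j
      exact IH j.val j.isLt (j.isLt.trans hl)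

end SeqStrat

section Continuations

variable {n : ℕ} (X : Fin n → Type) (k : (∀ i, X i) → (Fin n → ℝ)) (σ : SeqStrat n X)

theorem conts_eq_extendFrom (m : ℕ) (hm : m ≤ n)
    (x : ∀ j : Fin m, X ⟨j.val, j.isLt.trans_le hm⟩) (i : Fin m) :
    conts X k σ m hm x i =
      k (fun l => σ.extendFrom m hm x l.val l.isLt) ⟨i.val, i.isLt.trans_le hm⟩ := by
  induction m, hm using conts.induct with
  | case1 hm =>
    rw [conts, dif_pos rfl]
    congr 1
    funext l
    rw [SeqStrat.extendFrom_of_lt _ _ _ _ l.isLt]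
  | case2 m hm hne hlt _ IH =>
    rw [conts, dif_neg hne, IH]
    congr 1
    funext l
    refine σ.extendFrom_succ hlt x _ (fun j hj => dif_pos hj) ?_ l.val l.isLt
    rw [dif_neg (lt_irrefl m)]
    exact cast_eq _ _

theorem conts_snoc_last (i : Fin n) (x : ∀ j : Fin i.val, X ⟨j.val, j.isLt.trans i.isLt⟩)
    (xi : X i) :
    conts X k σ (i.val + 1) i.isLt
        (Fin.snoc (α := fun j : Fin (i.val + 1) => X ⟨j.val, j.isLt.trans_le i.isLt⟩) x xi)
        (Fin.last i.val) =
      k (deviatePlay σ i x xi) i := by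
  rw [conts_eq_extendFrom]
  congr 1
  funext l
  exact σ.extendFrom_snoc i x xi l.val l.isLt

end Continuations

theorem DDelta_isState_iff {m : ℕ} {X : Fin (m + 1) → Type} (σ : (DDelta m X).Strat)
    (k : (∀ i, X i) → (Fin (m + 1) → ℝ)) :
    (DDelta m X).IsState σ k ↔
      ∀ h xm, k (Fin.snoc h (σ h)) (Fin.last m) ≥ k (Fin.snoc h xm) (Fin.last m) :=
  Iff.rfl

theorem separable_states_are_subgame_perfect_equilibria_general
    (n : ℕ) (X : Fin n → Type)
    (k : (∀ i, X i) → (Fin n → ℝ)) (σ : SeqStrat n X) :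
    (∀ i : Fin n,
      (DDelta i.val (fun j => X ⟨j.val, Nat.lt_of_lt_of_le j.isLt i.isLt⟩)).IsState
        (σ i) (conts X k σ (i.val + 1) i.isLt)) ↔
    (∀ (i : Fin n) (x : ∀ j : Fin i.val, X (Fin.castLT j (j.isLt.trans i.isLt))) (xi : X i),
      k (deviatePlay σ i x (σ i x)) i ≥ k (deviatePlay σ i x xi) i) := by
  refine forall_congr' fun i => (DDelta_isState_iff _ _).trans ?_
  refine forall₂_congr fun x xi => ?_
  rw [conts_snoc_last, conts_snoc_last]

/-- Subgame perfection theorem: each `σ i` is a state of `D^Δ_{X₁,…,X_{i}}` over the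
continuation `k_i` (equivalently, `σ` arises from a `⊙`-separable state of the iterated
composite `⊙_{i=1}^n D^Δ_{X₁,…,X_i}` over `k`) if and only if `σ` is a subgame perfect
equilibrium of the `n`-player sequential game with payoff function `k`: for all players
`i`, all subgames `x` and all deviations `x_i`, `k(v^σ_{x,σ_i(x)})_i ≥ k(v^σ_{x,x_i})_i`. -/
theorem separable_states_are_subgame_perfect_equilibria
    (n : ℕ) (hn : 1 ≤ n) (X : Fin n → Type)
    (k : (∀ i, X i) → (Fin n → ℝ)) (σ : SeqStrat n X) :
    (∀ i : Fin n,
      (DDelta i.val (fun j => X ⟨j.val, Nat.lt_of_lt_of_le j.isLt i.isLt⟩)).IsState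
        (σ i) (conts X k σ (i.val + 1) i.isLt)) ↔
    (∀ (i : Fin n) (x : ∀ j : Fin i.val, X (Fin.castLT j (j.isLt.trans i.isLt))) (xi : X i),
      k (deviatePlay σ i x (σ i x)) i ≥ k (deviatePlay σ i x xi) i) :=
  separable_states_are_subgame_perfect_equilibria_general n X k σ
end

section
/- Let (G_i : (X_i, S) ⇸ (Y_i, R))_{i∈I} be a family of open games with common contravariant boundary sets S and R. Define the open game ∏_{i∈I} G_i : (∐_i X_i, S) ⇸ (∐_i Y_i, R) by: Σ(∏_i G_i) = ∏_i Σ(G_i); (∏_i G_i)(σ) is the lens with view ι_j(x) ↦ ι_j(v_{G_j(σ_j)}(x)) and update (ι_j(x), r) ↦ u_{G_j(σ_j)}(x, r); and (σ,σ') ∈ B_{∏_i G_i}(ι_j(h), k) iff (σ_j, σ'_j) ∈ B_{G_j}(h, k ∘ ι_j). Define projections π_j : ∏_i G_i → G_j with s(π_j) = (ι_j, id_S), t(π_j) = (ι_j, id_R) (lenses with view the coproduct inclusion and update the second projection) and Σ(π_j) the product projection. Then each π_j is a morphism of open games, and (∏_i G_i, (π_j)_{j∈I}) is a categorical product of the family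 (G_i) in the category Game_v: for every open game H and family of morphisms α_i : H → G_i there is a unique morphism α : H → ∏_i G_i with π_i ∘ α = α_i for all i. -/
/-- The product of a family of open games `G i : (X i, S) ⇸ (Y i, R)` with common
contravariant boundary: the open game `(∐ i, X i, S) ⇸ (∐ i, Y i, R)` with strategy
profiles `∏ i, Σ(G i)`, plays acting componentwise on the coproducts, and best response at
a history `ι_j h` given by the best response of `G j`. -/
def prodGame {I : Type} {X Y : I → Type} {S R : Type}
    (G : ∀ i : I, OpenGame (X i) S (Y i) R) :
    OpenGame (Σ i : I, X i) S (Σ i : I, Y i) R where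
  Strat := ∀ i : I, (G i).Strat
  play := fun σ =>
    ⟨fun x => ⟨x.1, ((G x.1).play (σ x.1)).v x.2⟩,
     fun x r => ((G x.1).play (σ x.1)).u x.2 r⟩
  B := fun h k σ σ' => (G h.1).B h.2 (fun y => k ⟨h.1, y⟩) (σ h.1) (σ' h.1)

/-- The projection morphism `π_j : ∏ i, G i → G j`, whose `s`- and `t`-components are the
lenses given by the coproduct inclusion and second projection, and whose `Σ`-component is
the product projection. -/
def prodGameProj {I : Type} {X Y : I → Type} {S R : Type}
    (G : ∀ i : I, OpenGame (X i) S (Y i) R) (j : I) :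
    OGMor (prodGame G) (G j) where
  s := ⟨fun x => ⟨j, x⟩, fun _ s => s⟩
  t := ⟨fun y => ⟨j, y⟩, fun _ r => r⟩
  f := fun σ => σ j
  comm := fun _ => rfl
  best := fun _ _ _ _ hB => hB

attribute [ext] Lens OGMor

namespace Lens

variable {I : Type} {X : I → Type} {S Z Q : Type}

def sigmaIncl (j : I) : Lens (X j) S (Σ i, X i) S := ⟨fun x => ⟨j, x⟩, fun _ s => s⟩

def sigmaDesc (l : ∀ i, Lens (X i) S Z Q) : Lens (Σ i, X i) S Z Q :=
  ⟨fun x => (l x.1).v x.2, fun x q => (l x.1).u x.2 q⟩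

theorem sigma_hom_ext {m m' : Lens (Σ i, X i) S Z Q}
    (h : ∀ i, m.comp (sigmaIncl i) = m'.comp (sigmaIncl i)) : m = m' := by
  ext ⟨i, x⟩
  · exact congrFun (congrArg Lens.v (h i)) x
  · exact congrFun (congrFun (congrArg Lens.u (h i)) x) _

end Lens

section prodGame

variable {I : Type} {X Y : I → Type} {S R W T W' T' : Type}
  {G : ∀ i : I, OpenGame (X i) S (Y i) R} {H : OpenGame W T W' T'}

def prodGameLift (α : ∀ i, OGMor H (G i)) : OGMor H (prodGame G) where
  s := Lens.sigmaDesc fun i => (α i).s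
  t := Lens.sigmaDesc fun i => (α i).t
  f σ i := (α i).f σ
  comm σ := Lens.sigma_hom_ext fun i => (α i).comm σ
  best h k σ σ' hB := (α h.1).best h.2 k σ σ' hB

theorem prodGameProj_vcomp_prodGameLift (α : ∀ i, OGMor H (G i)) (i : I) :
    (prodGameProj G i).vcomp (prodGameLift α) = α i := rfl

theorem prodGame_hom_ext {β β' : OGMor H (prodGame G)}
    (h : ∀ i, (prodGameProj G i).vcomp β = (prodGameProj G i).vcomp β') : β = β' := by
  ext1
  · exact Lens.sigma_hom_ext fun i => congrArg OGMor.s (h i)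
  · exact Lens.sigma_hom_ext fun i => congrArg OGMor.t (h i)
  · funext σ i
    exact congrFun (congrArg OGMor.f (h i)) σ

end prodGame

/-- `(∏ i, G i, (π_j)_j)` is a categorical product of the family `(G i)` in the category
of open games and morphisms: each `π_j` is a morphism of open games (witnessed by
`prodGameProj`), and for every open game `H` and family of morphisms `α i : H → G i` there
is a unique morphism `β : H → ∏ i, G i` with `π_i ∘ β = α i` for all `i`. -/
theorem prodGame_is_product {I : Type} {X Y : I → Type} {S R : Type}
    (G : ∀ i : I, OpenGame (X i) S (Y i) R) :
    ∀ (W T W' T' : Type) (H : OpenGame W T W' T') (α : ∀ i : I, OGMor H (G i)),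
      ∃! β : OGMor H (prodGame G), ∀ i : I, (prodGameProj G i).vcomp β = α i := by
  intro W T W' T' H α
  refine ⟨prodGameLift α, prodGameProj_vcomp_prodGameLift α, fun β hβ => ?_⟩
  exact prodGame_hom_ext fun i => by rw [hβ, prodGameProj_vcomp_prodGameLift]
end

section
/- Let (G_i : (X_i, S) ⇸ (Y_i, R))_{i∈I} be a family of open games and let ∏_{i∈I} G_i : (∐_i X_i, S) ⇸ (∐_i Y_i, R) be their product, with Σ(∏_i G_i) = ∏_i Σ(G_i), (∏_i G_i)(σ) the lens with view ι_j(x) ↦ ι_j(v_{G_j(σ_j)}(x)) and update (ι_j(x), r) ↦ u_{G_j(σ_j)}(x, r), and (σ,σ') ∈ B_{∏_i G_i}(ι_j(h), k) iff (σ_j, σ'_j) ∈ B_{G_j}(h, k ∘ ι_j). Then a pair (σ, k) with σ ∈ ∏_i Σ(G_i) and k : ∐_i Y_i → R is a state of ∏_i G_i (i.e. σ is a state over k) if and only if, for every i ∈ I, (σ_i, k ∘ ι_i) is a state of G_i. Consequently the map (σ,k) ↦ ((σ_i, k∘ι_i))_{i∈I} is a bijection from states of ∏_i G_i to families of states of the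 G_i. -/
abbrev OpenGame.States {X S Y R : Type} (G : OpenGame X S Y R) : Type :=
  { q : G.Strat × (Y → R) // G.IsState q.1 q.2 }

section prodGame

variable {I : Type} {X Y : I → Type} {S R : Type} (G : ∀ i : I, OpenGame (X i) S (Y i) R)

theorem prodGame_isState_iff (σ : ∀ i : I, (G i).Strat) (k : (Σ i : I, Y i) → R) :
    (prodGame G).IsState σ k ↔ ∀ i : I, (G i).IsState (σ i) (fun y => k ⟨i, y⟩) :=
  Sigma.forall

def profileContEquiv :
    (∀ i : I, (G i).Strat) × ((Σ i : I, Y i) → R) ≃ ∀ i : I, (G i).Strat × (Y i → R) :=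
  ((Equiv.refl _).prodCongr (Equiv.piCurry fun _ _ => R)).trans
    (Equiv.arrowProdEquivProdArrow _ _ _).symm

def prodGameStatesEquiv : (prodGame G).States ≃ ∀ i : I, (G i).States :=
  (Equiv.subtypeEquiv (profileContEquiv G) fun p => prodGame_isState_iff G p.1 p.2).trans
    Equiv.subtypePiEquivPi

theorem prodGameStatesEquiv_apply_coe (p : (prodGame G).States) (i : I) :
    (prodGameStatesEquiv G p i : (G i).Strat × (Y i → R)) = (p.1.1 i, fun y => p.1.2 ⟨i, y⟩) :=
  rfl

end prodGame

/-- A pair `(σ, k)` is a state of the product `∏ i, G i` iff for every `i`, `(σ i, k ∘ ι_i)`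
is a state of `G i`; consequently `(σ, k) ↦ ((σ i, k ∘ ι_i))_i` is a bijection from states
of `∏ i, G i` to families of states of the `G i`. -/
theorem states_of_prodGame {I : Type} {X Y : I → Type} {S R : Type}
    (G : ∀ i : I, OpenGame (X i) S (Y i) R) :
    (∀ (σ : ∀ i : I, (G i).Strat) (k : (Σ i : I, Y i) → R),
      (prodGame G).IsState σ k ↔ ∀ i : I, (G i).IsState (σ i) (fun y => k ⟨i, y⟩)) ∧
    (∃ e : { p : (∀ i : I, (G i).Strat) × ((Σ i : I, Y i) → R) //
              (prodGame G).IsState p.1 p.2 } ≃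
           (∀ i : I, { q : (G i).Strat × (Y i → R) // (G i).IsState q.1 q.2 }),
      ∀ p i, ((e p) i : ((G i).Strat × (Y i → R))) = (p.1.1 i, fun y => p.1.2 ⟨i, y⟩)) :=
  ⟨prodGame_isState_iff G, prodGameStatesEquiv G, prodGameStatesEquiv_apply_coe G⟩
end
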